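/- Let U, V, F be real Banach spaces, K : V → U a continuous linear operator, h ∈ V, and c : U × F → V a map. Let v₀ ∈ V and f₀ ∈ F satisfy v₀ + c(K v₀, f₀) − h = 0. Assume there is ρ > 0 such that c is continuously Fréchet differentiable on the open ball of radius ρ centred at (K v₀, f₀) in U × F, that for every (u, f) in the closed ball of radius ρ/2 centred at (K v₀, f₀) the partial Fréchet derivative D₂c(u, f) : F → V is a continuous linear bijection with continuous inverse, and that A := sup ‖D₁c(u, f)‖ and B := sup ‖(D₂c(u, f))⁻¹‖, both suprema taken over this closed ball, are finite. Then there exist ε, δ > 0 and a map e from the open ball B_V(v₀, ε) into the open ball B_F(f₀, δ) such that v + c(K v, e(v)) − h = 0 for every v ∈ B_V(v₀, ε), and e is Lipschitz with constant B(1 + A‖K‖): for all v₁, v₂ ∈ B_V(v₀, ε), ‖e(v₁) − e(v₂)‖_F ≤ B(1 + A‖K‖) ‖v₁ − v₂‖_V. -/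

import Mathlib

/-!
The map `Ψ (v, f) = (v, v + c (K v, f) - h)` has, at every point where `(K v, f)` lies in the
ball of radius `ρ / 2`, the block lower triangular derivative
`(a, b) ↦ (a, (1 + D₁c K) a + D₂c b)`, which is invertible because `D₂c` is. By the inverse
function theorem `Ψ` is a local diffeomorphism at `(v₀, f₀)`, and `e v` is the second component
of `Ψ⁻¹ (v, 0)`. Its derivative is `-(D₂c)⁻¹ (1 + D₁c K)`, of norm at most `B (1 + A ‖K‖)` as
long as `(K v, e v)` stays in that ball, which holds for `v` near `v₀` by continuity of `Ψ⁻¹`;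
the mean value inequality then gives the Lipschitz bound.
-/

open Metric ContinuousLinearMap Topology

section

variable {𝕜 : Type*} [NontriviallyNormedField 𝕜]
  {E F G : Type*} [NormedAddCommGroup E] [NormedSpace 𝕜 E] [NormedAddCommGroup F]
  [NormedSpace 𝕜 F] [NormedAddCommGroup G] [NormedSpace 𝕜 G]

theorem ContinuousLinearMap.fst_prod_coprod_eq_skewProd (L₁ : E →L[𝕜] G) (L₂ : F ≃L[𝕜] G) :
    (fst 𝕜 E F).prod (L₁.coprod (L₂ : F →L[𝕜] G)) =
      ((ContinuousLinearEquiv.refl 𝕜 E).skewProd L₂ L₁ : E × F →L[𝕜] E × G) :=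
  ContinuousLinearMap.ext fun _ => by simp [add_comm]

theorem ContinuousLinearEquiv.snd_comp_skewProd_symm_comp_inl (L₁ : E →L[𝕜] G)
    (L₂ : F ≃L[𝕜] G) :
    snd 𝕜 E F ∘L (((ContinuousLinearEquiv.refl 𝕜 E).skewProd L₂ L₁).symm : E × G →L[𝕜] E × F)
        ∘L inl 𝕜 E G = -((L₂.symm : G →L[𝕜] F) ∘L L₁) := by
  ext x; simp

theorem HasFDerivAt.eq_coprod_fderiv {c : E × F → G} {D : E × F →L[𝕜] G} {u : E} {f : F}
    (hc : HasFDerivAt c D (u, f)) :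
    D = (fderiv 𝕜 (fun u' => c (u', f)) u).coprod (fderiv 𝕜 (fun f' => c (u, f')) f) := by
  have h₁ : HasFDerivAt (fun u' => c (u', f)) (D ∘L inl 𝕜 E F) u :=
    hc.comp u (hasFDerivAt_prodMk_left u f)
  have h₂ : HasFDerivAt (fun f' => c (u, f')) (D ∘L inr 𝕜 E F) f :=
    hc.comp f (hasFDerivAt_prodMk_right u f)
  rw [h₁.fderiv, h₂.fderiv]
  exact ContinuousLinearMap.ext fun p => (D.comp_inl_add_comp_inr p).symm

theorem ContinuousLinearMap.norm_comp_id_add_comp_le {T : G →L[𝕜] F} {D : E →L[𝕜] G}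
    {K : G →L[𝕜] E} {A B : ℝ} (hT : ‖T‖ ≤ B) (hD : ‖D‖ ≤ A) :
    ‖T ∘L (ContinuousLinearMap.id 𝕜 G + D ∘L K)‖ ≤ B * (1 + A * ‖K‖) := by
  have hsum : ‖ContinuousLinearMap.id 𝕜 G + D ∘L K‖ ≤ 1 + A * ‖K‖ :=
    (norm_add_le _ _).trans (add_le_add norm_id_le
      ((opNorm_comp_le _ _).trans (mul_le_mul_of_nonneg_right hD (norm_nonneg _))))
  exact (opNorm_comp_le _ _).trans
    (mul_le_mul hT hsum (norm_nonneg _) ((norm_nonneg _).trans hT))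

variable {H : OpenPartialHomeomorph (E × F) (E × G)} {Φ : E × F → G}

theorem OpenPartialHomeomorph.symm_eq_of_coe_eq_prodMk (hH : ⇑H = fun q => (q.1, Φ q))
    {y : E × G} (hy : y ∈ H.target) : H.symm y = (y.1, (H.symm y).2) ∧ Φ (H.symm y) = y.2 := by
  have hinv : (H.symm y).1 = y.1 ∧ Φ (H.symm y) = y.2 := by
    simpa [hH, Prod.ext_iff] using H.right_inv hy
  exact ⟨Prod.ext hinv.1 rfl, hinv.2⟩

theorem OpenPartialHomeomorph.hasFDerivAt_snd_symm_prodMk (hH : ⇑H = fun q => (q.1, Φ q))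
    {x : E} {z : G} (hxz : (x, z) ∈ H.target) {L₁ : E →L[𝕜] G} {L₂ : F ≃L[𝕜] G}
    (hΦ : HasFDerivAt Φ (L₁.coprod (L₂ : F →L[𝕜] G)) (H.symm (x, z))) :
    HasFDerivAt (fun x' => (H.symm (x', z)).2) (-((L₂.symm : G →L[𝕜] F) ∘L L₁)) x := by
  have hH' : HasFDerivAt H
      (((ContinuousLinearEquiv.refl 𝕜 E).skewProd L₂ L₁ : (E × F) ≃L[𝕜] E × G) :
        E × F →L[𝕜] E × G) (H.symm (x, z)) := by
    rw [hH, ← fst_prod_coprod_eq_skewProd]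
    exact hasFDerivAt_fst.prodMk hΦ
  rw [← ContinuousLinearEquiv.snd_comp_skewProd_symm_comp_inl]
  exact ((H.hasFDerivAt_symm hxz hH').comp x (hasFDerivAt_prodMk_left x z)).snd

end

section ImplicitFunction

variable {E F G : Type*} [NormedAddCommGroup E] [NormedSpace ℝ E] [CompleteSpace E]
  [NormedAddCommGroup F] [NormedSpace ℝ F] [CompleteSpace F]
  [NormedAddCommGroup G] [NormedSpace ℝ G]

theorem exists_implicitFunction_norm_sub_le {Φ : E × F → G} {S : Set (E × F)} (hS : IsOpen S)
    {p₀ : E × F} (hp₀ : p₀ ∈ S) {C : ℝ}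
    (hΦ : ∀ p ∈ S, ∃ L₁ : E →L[ℝ] G, ∃ L₂ : F ≃L[ℝ] G,
      HasStrictFDerivAt Φ (L₁.coprod (L₂ : F →L[ℝ] G)) p ∧ ‖(L₂.symm : G →L[ℝ] F) ∘L L₁‖ ≤ C) :
    ∃ ε > 0, ∃ e : E → F,
      (∀ x ∈ ball p₀.1 ε, (x, e x) ∈ S ∧ Φ (x, e x) = Φ p₀) ∧
      ∀ x₁ ∈ ball p₀.1 ε, ∀ x₂ ∈ ball p₀.1 ε, ‖e x₁ - e x₂‖ ≤ C * ‖x₁ - x₂‖ := by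
  obtain ⟨L₁, L₂, hL, -⟩ := hΦ p₀ hp₀
  have hΨ : HasStrictFDerivAt (fun q : E × F => (q.1, Φ q))
      (((ContinuousLinearEquiv.refl ℝ E).skewProd L₂ L₁ : (E × F) ≃L[ℝ] E × G) :
        E × F →L[ℝ] E × G) p₀ := by
    rw [← fst_prod_coprod_eq_skewProd]
    exact hasStrictFDerivAt_fst.prodMk hL
  set H := hΨ.toOpenPartialHomeomorph _
  have hH : ⇑H = fun q => (q.1, Φ q) := hΨ.toOpenPartialHomeomorph_coe
  set z₀ := Φ p₀
  have hx₀ : (p₀.1, z₀) ∈ H.target := hΨ.image_mem_toOpenPartialHomeomorph_target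
  have hW : {x | (x, z₀) ∈ H.target ∧ H.symm (x, z₀) ∈ S} ∈ 𝓝 p₀.1 := by
    have hcont : ContinuousAt (fun x => H.symm (x, z₀)) p₀.1 :=
      ContinuousAt.comp (f := fun x => (x, z₀)) (H.continuousAt_symm hx₀) (by fun_prop)
    have hS₀ : H.symm (p₀.1, z₀) ∈ S := by
      rwa [show H.symm (p₀.1, z₀) = p₀ from H.left_inv hΨ.mem_toOpenPartialHomeomorph_source]
    exact Filter.inter_mem
      ((Continuous.prodMk_left z₀).continuousAt.preimage_mem_nhds
        (H.open_target.mem_nhds hx₀))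
      (hcont.preimage_mem_nhds (hS.mem_nhds hS₀))
  obtain ⟨ε, hε, hεW⟩ := Metric.mem_nhds_iff.mp hW
  set e : E → F := fun x => (H.symm (x, z₀)).2
  have hgraph : ∀ x ∈ ball p₀.1 ε,
      H.symm (x, z₀) = (x, e x) ∧ (x, e x) ∈ S ∧ Φ (x, e x) = z₀ := by
    intro x hx
    obtain ⟨hsymm, hsol⟩ := H.symm_eq_of_coe_eq_prodMk hH (hεW hx).1
    exact ⟨hsymm, hsymm ▸ (hεW hx).2, hsymm ▸ hsol⟩
  have hderiv : ∀ x ∈ ball p₀.1 ε, DifferentiableAt ℝ e x ∧ ‖fderiv ℝ e x‖ ≤ C := by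
    intro x hx
    obtain ⟨hsymm, hxS, -⟩ := hgraph x hx
    obtain ⟨L₁', L₂', hL', hC⟩ := hΦ _ hxS
    have he := H.hasFDerivAt_snd_symm_prodMk hH (hεW hx).1 (hsymm ▸ hL'.hasFDerivAt)
    exact ⟨he.differentiableAt, by rwa [he.fderiv, norm_neg]⟩
  refine ⟨ε, hε, e, fun x hx => (hgraph x hx).2, fun x₁ hx₁ x₂ hx₂ => ?_⟩
  exact (convex_ball p₀.1 ε).norm_image_sub_le_of_norm_fderiv_le
    (fun x hx => (hderiv x hx).1) (fun x hx => (hderiv x hx).2) hx₂ hx₁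

end ImplicitFunction

theorem ContDiffAt.hasStrictFDerivAt_fst_add_comp_sub {U V F : Type*}
    [NormedAddCommGroup U] [NormedSpace ℝ U] [NormedAddCommGroup V] [NormedSpace ℝ V]
    [NormedAddCommGroup F] [NormedSpace ℝ F] (K : V →L[ℝ] U) (h : V) {c : U × F → V}
    {v : V} {f : F} (hc : ContDiffAt ℝ 1 c (K v, f)) :
    HasStrictFDerivAt (fun q : V × F => q.1 + c (K q.1, q.2) - h)
      ((ContinuousLinearMap.id ℝ V + fderiv ℝ (fun u' => c (u', f)) (K v) ∘L K).coprod
        (fderiv ℝ (fun f' => c (K v, f')) f)) (v, f) := by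
  have hcs := hc.hasStrictFDerivAt one_ne_zero
  rw [hcs.hasFDerivAt.eq_coprod_fderiv] at hcs
  set D₁ := fderiv ℝ (fun u' => c (u', f)) (K v)
  set D₂ := fderiv ℝ (fun f' => c (K v, f')) f
  have hcK := hcs.comp (v, f) (K.prodMap (ContinuousLinearMap.id ℝ F)).hasStrictFDerivAt
  have hD : (ContinuousLinearMap.id ℝ V + D₁ ∘L K).coprod D₂ =
      ContinuousLinearMap.fst ℝ V F + D₁.coprod D₂ ∘L K.prodMap (ContinuousLinearMap.id ℝ F) :=
    ContinuousLinearMap.ext fun _ => by simp [add_assoc]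
  rw [hD]
  exact (hasStrictFDerivAt_fst.add hcK).sub_const h

theorem stmt0_general {U V F : Type*}
    [NormedAddCommGroup U] [NormedSpace ℝ U]
    [NormedAddCommGroup V] [NormedSpace ℝ V] [CompleteSpace V]
    [NormedAddCommGroup F] [NormedSpace ℝ F] [CompleteSpace F]
    (K : V →L[ℝ] U) (h : V) (c : U × F → V) (v₀ : V) (f₀ : F)
    (hsol : v₀ + c (K v₀, f₀) - h = 0)
    (ρ : ℝ) (hρ : 0 < ρ)
    (hc : ContDiffOn ℝ 1 c (ball ((K v₀ : U), f₀) ρ))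
    (A B : ℝ)
    (hA : ∀ u : U, ∀ f : F, (u, f) ∈ closedBall ((K v₀ : U), f₀) (ρ / 2) →
      ‖fderiv ℝ (fun u' => c (u', f)) u‖ ≤ A)
    (hB : ∀ u : U, ∀ f : F, (u, f) ∈ closedBall ((K v₀ : U), f₀) (ρ / 2) →
      ∃ T : V →L[ℝ] F,
        (∀ x : F, T (fderiv ℝ (fun f' => c (u, f')) f x) = x) ∧
        (∀ y : V, fderiv ℝ (fun f' => c (u, f')) f (T y) = y) ∧
        ‖T‖ ≤ B) :
    ∃ ε > 0, ∃ δ > 0, ∃ e : V → F,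
      (∀ v ∈ ball v₀ ε, e v ∈ ball f₀ δ ∧ v + c (K v, e v) - h = 0) ∧
      (∀ v₁ ∈ ball v₀ ε, ∀ v₂ ∈ ball v₀ ε,
        ‖e v₁ - e v₂‖ ≤ B * (1 + A * ‖K‖) * ‖v₁ - v₂‖) := by
  set S : Set (V × F) := {q | (K q.1, q.2) ∈ ball (K v₀, f₀) (ρ / 2)}
  have hS : IsOpen S := isOpen_ball.preimage (by fun_prop)
  have hp₀ : (v₀, f₀) ∈ S := mem_ball_self (half_pos hρ)
  obtain ⟨ε, hε, e, hgraph, hlip⟩ :=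
    exists_implicitFunction_norm_sub_le (Φ := fun q : V × F => q.1 + c (K q.1, q.2) - h)
      hS hp₀ (C := B * (1 + A * ‖K‖)) <| by
    rintro ⟨v, f⟩ hq
    have hq' : (K v, f) ∈ closedBall (K v₀, f₀) (ρ / 2) := ball_subset_closedBall hq
    have hcv : ContDiffAt ℝ 1 c (K v, f) :=
      hc.contDiffAt (isOpen_ball.mem_nhds (ball_subset_ball (half_le_self hρ.le) hq))
    obtain ⟨T, hT₁, hT₂, hTB⟩ := hB _ _ hq'
    exact ⟨_, .equivOfInverse _ T hT₁ hT₂, hcv.hasStrictFDerivAt_fst_add_comp_sub K h,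
      norm_comp_id_add_comp_le hTB (hA _ _ hq')⟩
  refine ⟨ε, hε, ρ / 2, half_pos hρ, e, fun v hv => ⟨?_, (hgraph v hv).2.trans hsol⟩, hlip⟩
  have hv : dist (K v, e v) (K v₀, f₀) < ρ / 2 := (hgraph v hv).1
  rw [Prod.dist_eq, max_lt_iff] at hv
  exact hv.2

/-- Let `U, V, F` be real Banach spaces, `K : V → U` a continuous linear
operator, `h ∈ V`, and `c : U × F → V`.  Let `v₀ ∈ V`, `f₀ ∈ F` satisfy
`v₀ + c (K v₀, f₀) − h = 0`.  Assume `c` is continuously Fréchet differentiable on the open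
ball of radius `ρ > 0` around `(K v₀, f₀)`, that on the closed ball of radius `ρ/2` the
partial derivative `D₂c (u, f) : F → V` is a continuous linear bijection with continuous
inverse, and that `A = sup ‖D₁c (u, f)‖` and `B = sup ‖(D₂c (u, f))⁻¹‖` over this closed
ball are finite.  Then there exist `ε, δ > 0` and a map `e : B_V(v₀, ε) → B_F(f₀, δ)` with
`v + c (K v, e v) − h = 0` on `B_V(v₀, ε)`, Lipschitz with constant `B (1 + A ‖K‖)`. -/
theorem stmt0 {U V F : Type*}
    [NormedAddCommGroup U] [NormedSpace ℝ U] [CompleteSpace U]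
    [NormedAddCommGroup V] [NormedSpace ℝ V] [CompleteSpace V]
    [NormedAddCommGroup F] [NormedSpace ℝ F] [CompleteSpace F]
    (K : V →L[ℝ] U) (h : V) (c : U × F → V) (v₀ : V) (f₀ : F)
    (hsol : v₀ + c (K v₀, f₀) - h = 0)
    (ρ : ℝ) (hρ : 0 < ρ)
    (hc : ContDiffOn ℝ 1 c (ball ((K v₀ : U), f₀) ρ))
    (A B : ℝ)
    (hA : ∀ u : U, ∀ f : F, (u, f) ∈ closedBall ((K v₀ : U), f₀) (ρ / 2) →
      ‖fderiv ℝ (fun u' => c (u', f)) u‖ ≤ A)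
    (hB : ∀ u : U, ∀ f : F, (u, f) ∈ closedBall ((K v₀ : U), f₀) (ρ / 2) →
      ∃ T : V →L[ℝ] F,
        (∀ x : F, T (fderiv ℝ (fun f' => c (u, f')) f x) = x) ∧
        (∀ y : V, fderiv ℝ (fun f' => c (u, f')) f (T y) = y) ∧
        ‖T‖ ≤ B) :
    ∃ ε > 0, ∃ δ > 0, ∃ e : V → F,
      (∀ v ∈ ball v₀ ε, e v ∈ ball f₀ δ ∧ v + c (K v, e v) - h = 0) ∧
      (∀ v₁ ∈ ball v₀ ε, ∀ v₂ ∈ ball v₀ ε,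
        ‖e v₁ - e v₂‖ ≤ B * (1 + A * ‖K‖) * ‖v₁ - v₂‖) :=
  stmt0_general K h c v₀ f₀ hsol ρ hρ hc A B hA hB
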